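/- Consider the primal DNN min ⟨C,X⟩ subject to 𝒜X = b, X positive semidefinite, X ≥ 0 entrywise, with optimal solution X* of optimal value p*. Given y ∈ ℝ^m and a symmetric entrywise-nonnegative matrix S, define Z̃ = C − 𝒜ᵀy − S. If x̄ ≥ λ_max(X*) and z̲ ≤ λ_min(Z̃), then p* ≥ bᵀy + x̄ · (sum of negative eigenvalues of Z̃) ≥ bᵀy + n·x̄·min{0, z̲}. -/

import Mathlib

/-!
Write `Z̃ = U diag(λ) Uᵀ` with `U` orthogonal. Since `X*` is feasible,
`p* = ⟨C, X*⟩ = ⟨Z̃, X*⟩ + bᵀy + ⟨S, X*⟩` with `⟨S, X*⟩ ≥ 0`, and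
`⟨Z̃, X*⟩ = ∑ₖ λₖ (UᵀX*U)ₖₖ`. The diagonal entries of `UᵀX*U` lie in `[0, x̄]`
because `0 ⪯ X* ⪯ x̄ I`, so every term is at least `x̄ · min(λₖ, 0)`.
-/

open Matrix

open scoped MatrixOrder

namespace Matrix

theorem diag_le_of_le_smul_one {ι : Type*} [DecidableEq ι] {X : Matrix ι ι ℝ} {c : ℝ}
    (h : X ≤ c • 1) (k : ι) : X k k ≤ c := by
  simpa using (le_iff.mp h).diag_nonneg (i := k)

theorem trace_mul_nonneg_of_nonneg {ι : Type*} [Fintype ι] {S X : Matrix ι ι ℝ}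
    (hS : ∀ i j, 0 ≤ S i j) (hX : ∀ i j, 0 ≤ X i j) : 0 ≤ (S * X).trace :=
  Finset.sum_nonneg fun i _ => Finset.sum_nonneg fun j _ => mul_nonneg (hS i j) (hX j i)

variable {ι : Type*} [Fintype ι] [DecidableEq ι]

theorem IsHermitian.le_smul_one_of_eigenvalues_le {X : Matrix ι ι ℝ} (hX : X.IsHermitian)
    {c : ℝ} (h : ∀ k, hX.eigenvalues k ≤ c) : X ≤ c • 1 := by
  rw [← Algebra.algebraMap_eq_smul_one]
  refine le_algebraMap_of_spectrum_le (fun x hx => ?_) hX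
  obtain ⟨k, rfl⟩ := hX.spectrum_real_eq_range_eigenvalues ▸ hx
  exact h k

theorem unitary_conj_le_smul_one {X : Matrix ι ι ℝ} {c : ℝ} (h : X ≤ c • 1)
    (U : unitary (Matrix ι ι ℝ)) : star (U : Matrix ι ι ℝ) * X * U ≤ c • 1 := by
  simpa using star_left_conjugate_le_conjugate h (U : Matrix ι ι ℝ)

theorem IsHermitian.trace_mul_eq_sum_eigenvalues_mul {Z : Matrix ι ι ℝ} (hZ : Z.IsHermitian)
    (X : Matrix ι ι ℝ) :
    (Z * X).trace = ∑ k, hZ.eigenvalues k *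
      (star (hZ.eigenvectorUnitary : Matrix ι ι ℝ) * X * hZ.eigenvectorUnitary) k k := by
  conv_lhs => rw [hZ.spectral_theorem, Unitary.conjStarAlgAut_apply]
  rw [Matrix.mul_assoc, Matrix.mul_assoc, trace_mul_comm]
  simp only [Matrix.mul_assoc]
  simp [trace]

theorem IsHermitian.mul_sum_neg_eigenvalues_le_trace_mul {Z X : Matrix ι ι ℝ}
    (hZ : Z.IsHermitian) (hX : X.PosSemidef) {c : ℝ} (hXc : X ≤ c • 1) :
    c * ∑ k ∈ Finset.univ.filter (fun k => hZ.eigenvalues k < 0), hZ.eigenvalues k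
      ≤ (Z * X).trace := by
  set U := (hZ.eigenvectorUnitary : Matrix ι ι ℝ)
  have hdiag_nonneg (k : ι) : 0 ≤ (star U * X * U) k k :=
    (hX.conjTranspose_mul_mul_same U).diag_nonneg
  have hdiag_le (k : ι) : (star U * X * U) k k ≤ c :=
    diag_le_of_le_smul_one (unitary_conj_le_smul_one hXc _) k
  rw [hZ.trace_mul_eq_sum_eigenvalues_mul, Finset.sum_filter, Finset.mul_sum]
  refine Finset.sum_le_sum fun k _ => ?_
  split_ifs with hk
  · nlinarith [hdiag_le k]
  · nlinarith [hdiag_nonneg k]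

end Matrix

theorem card_mul_min_le_sum_filter_neg {ι : Type*} [Fintype ι] (f : ι → ℝ) {z : ℝ}
    (hz : ∀ k, z ≤ f k) :
    Fintype.card ι * min 0 z ≤ ∑ k ∈ Finset.univ.filter (fun k => f k < 0), f k := by
  rw [Finset.sum_filter, ← nsmul_eq_mul, ← Finset.card_univ, ← Finset.sum_const]
  refine Finset.sum_le_sum fun k _ => ?_
  split_ifs with hk
  · exact (min_le_right _ _).trans (hz k)
  · exact min_le_left _ _

theorem stmt_2_general (n m : ℕ)
    (C : Matrix (Fin n) (Fin n) ℝ) (A : Fin m → Matrix (Fin n) (Fin n) ℝ)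
    (b : Fin m → ℝ)
    (Xstar : Matrix (Fin n) (Fin n) ℝ) (pstar : ℝ)
    (hfeas : (∀ i, (A i * Xstar).trace = b i) ∧ Xstar.PosSemidef ∧ ∀ i j, 0 ≤ Xstar i j)
    (hp : pstar = (C * Xstar).trace)
    (y : Fin m → ℝ) (S : Matrix (Fin n) (Fin n) ℝ)
    (hSnn : ∀ i j, 0 ≤ S i j)
    (Zt : Matrix (Fin n) (Fin n) ℝ)
    (hZtdef : Zt = C - (∑ i, y i • A i) - S)
    (hZtH : Zt.IsHermitian)
    (xbar zlow : ℝ)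
    (hxbar : ∀ k, hfeas.2.1.1.eigenvalues k ≤ xbar)
    (hzlow : ∀ k, zlow ≤ hZtH.eigenvalues k) :
    pstar ≥ (∑ i, b i * y i)
      + xbar * ∑ k ∈ Finset.univ.filter (fun k => hZtH.eigenvalues k < 0), hZtH.eigenvalues k
    ∧ (∑ i, b i * y i)
      + xbar * ∑ k ∈ Finset.univ.filter (fun k => hZtH.eigenvalues k < 0), hZtH.eigenvalues k
      ≥ (∑ i, b i * y i) + (n : ℝ) * xbar * min 0 zlow := by
  have hweak : (C * Xstar).trace = (Zt * Xstar).trace + ∑ i, b i * y i + (S * Xstar).trace := by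
    have hC_eq : C = Zt + ∑ i, y i • A i + S := by rw [hZtdef]; abel
    rw [hC_eq, add_mul, add_mul, trace_add, trace_add, Finset.sum_mul, trace_sum]
    simp [trace_smul, hfeas.1, mul_comm]
  have hZX := hZtH.mul_sum_neg_eigenvalues_le_trace_mul hfeas.2.1
    (hfeas.2.1.1.le_smul_one_of_eigenvalues_le hxbar)
  have hSX := trace_mul_nonneg_of_nonneg hSnn hfeas.2.2
  refine ⟨by linarith, ?_⟩
  rcases Nat.eq_zero_or_pos n with rfl | hn
  · simp
  · have hxbar_nonneg : 0 ≤ xbar := (hfeas.2.1.eigenvalues_nonneg ⟨0, hn⟩).trans (hxbar _)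
    have hbound := mul_le_mul_of_nonneg_left
      (card_mul_min_le_sum_filter_neg hZtH.eigenvalues hzlow) hxbar_nonneg
    rw [Fintype.card_fin] at hbound
    linarith

/-- error bound of Jansson–Chaykin–Keil for DNNs. For a primal
optimal `Xstar` with value `pstar`, and any `y`, nonnegative symmetric `S`,
setting `Zt = C − 𝒜ᵀy − S`, if `xbar ≥ λ_max(Xstar)` and `zlow ≤ λ_min(Zt)` then
`pstar ≥ bᵀy + xbar·(sum of negative eigenvalues of Zt) ≥ bᵀy + n·xbar·min{0,zlow}`. -/
theorem stmt_2 (n m : ℕ)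
    (C : Matrix (Fin n) (Fin n) ℝ) (A : Fin m → Matrix (Fin n) (Fin n) ℝ)
    (b : Fin m → ℝ)
    (hC : C.IsSymm) (hA : ∀ i, (A i).IsSymm)
    (Xstar : Matrix (Fin n) (Fin n) ℝ) (pstar : ℝ)
    (hfeas : (∀ i, (A i * Xstar).trace = b i) ∧ Xstar.PosSemidef ∧ ∀ i j, 0 ≤ Xstar i j)
    (hopt : ∀ X : Matrix (Fin n) (Fin n) ℝ,
      ((∀ i, (A i * X).trace = b i) ∧ X.PosSemidef ∧ ∀ i j, 0 ≤ X i j) →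
      (C * Xstar).trace ≤ (C * X).trace)
    (hp : pstar = (C * Xstar).trace)
    (y : Fin m → ℝ) (S : Matrix (Fin n) (Fin n) ℝ)
    (hS : S.IsSymm) (hSnn : ∀ i j, 0 ≤ S i j)
    (Zt : Matrix (Fin n) (Fin n) ℝ)
    (hZtdef : Zt = C - (∑ i, y i • A i) - S)
    (hZtH : Zt.IsHermitian)
    (xbar zlow : ℝ)
    (hxbar : ∀ k, hfeas.2.1.1.eigenvalues k ≤ xbar)
    (hzlow : ∀ k, zlow ≤ hZtH.eigenvalues k) :
    pstar ≥ (∑ i, b i * y i)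
      + xbar * ∑ k ∈ Finset.univ.filter (fun k => hZtH.eigenvalues k < 0), hZtH.eigenvalues k
    ∧ (∑ i, b i * y i)
      + xbar * ∑ k ∈ Finset.univ.filter (fun k => hZtH.eigenvalues k < 0), hZtH.eigenvalues k
      ≥ (∑ i, b i * y i) + (n : ℝ) * xbar * min 0 zlow :=
  stmt_2_general n m C A b Xstar pstar hfeas hp y S hSnn Zt hZtdef hZtH xbar zlow hxbar hzlow
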